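/- arXiv:1011.2591 — 4 statements merged into one kernel-verified Lean document; each statement's English description precedes it below -/
import Mathlib

section
/- For n ≥ 2 and q ≥ 2 and any vertex x of H(n,q), the vertex clique cover number of the open neighborhood N(x) (as an induced subgraph) equals n. -/
/-!
The neighbours of `x` are the words `update x i a` with `a ≠ x i`. For each coordinate `i` those
with a changed `i`-th entry form a clique (a punctured line through `x`), and these `n` cliques
cover `N(x)`. Conversely, changing one coordinate `i` for each `i` gives `n` pairwise non-adjacent
neighbours (any two are at distance 2), and no clique contains two of them, so every clique cover
needs at least `n` cliques.
-/

/-- The Hamming graph H(n,q): vertices are n-tuples over [q],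
adjacent iff Hamming distance is 1. -/
def hamming (n q : ℕ) : SimpleGraph (Fin n → Fin q) where
  Adj x y := hammingDist x y = 1
  symm := ⟨fun x y h => (hammingDist_comm y x).trans h⟩
  loopless := ⟨fun x h => by simp [hammingDist_self] at h⟩

/-- The vertex clique cover number: minimum size of a family of cliques covering all vertices. -/
noncomputable def vccNum {V : Type*} (G : SimpleGraph V) : ℕ :=
  sInf {m | ∃ F : Finset (Set V), F.card = m ∧ (∀ S ∈ F, G.IsClique S) ∧ ∀ v, ∃ S ∈ F, v ∈ S}

namespace SimpleGraph

variable {V ι : Type*} {G : SimpleGraph V}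

theorem vccNum_le_card [Fintype ι] (S : ι → Set V) (hS : ∀ i, G.IsClique (S i))
    (hcover : ∀ v, ∃ i, v ∈ S i) : vccNum G ≤ Fintype.card ι := by
  classical
  calc vccNum G ≤ (Finset.univ.image S).card :=
        Nat.sInf_le ⟨_, rfl, by simpa using hS, fun v => by simpa using hcover v⟩
    _ ≤ Fintype.card ι := Finset.card_image_le

theorem card_le_card_of_isClique_cover [Fintype ι] {y : ι → V} (hy : Function.Injective y)
    (hind : G.IsIndepSet (Set.range y)) {F : Finset (Set V)} (hF : ∀ S ∈ F, G.IsClique S)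
    (hcover : ∀ v, ∃ S ∈ F, v ∈ S) : Fintype.card ι ≤ F.card := by
  choose T hTF hyT using fun i => hcover (y i)
  have hT : Function.Injective T := fun i j hij => by
    by_contra hne
    exact hind (Set.mem_range_self i) (Set.mem_range_self j) (hy.ne hne)
      (hF _ (hTF i) (hyT i) (hij ▸ hyT j) (hy.ne hne))
  simpa using Finset.card_le_card_of_injOn (s := Finset.univ) T (fun i _ => hTF i) hT.injOn

theorem card_le_vccNum [Finite V] [Fintype ι] {y : ι → V} (hy : Function.Injective y)
    (hind : G.IsIndepSet (Set.range y)) : Fintype.card ι ≤ vccNum G := by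
  have : Fintype V := Fintype.ofFinite V
  refine le_csInf ⟨_, Finset.univ.image ({·}), rfl, ?_, fun v => ?_⟩ ?_
  · simp
  · simp
  · rintro m ⟨F, rfl, hF, hcover⟩
    exact card_le_card_of_isClique_cover hy hind hF hcover

end SimpleGraph

section hammingDist

variable {ι : Type*} [Fintype ι] [DecidableEq ι] {β : ι → Type*} [∀ i, DecidableEq (β i)]

theorem hammingDist_eq_one_iff {x y : ∀ i, β i} :
    hammingDist x y = 1 ↔ ∃ i, ∃ a ≠ x i, y = Function.update x i a := by
  unfold hammingDist
  rw [Finset.card_eq_one]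
  constructor
  · rintro ⟨i, hi⟩
    have hne : ∀ j, x j ≠ y j ↔ j = i := fun j => by
      simpa using congrArg (j ∈ ·) hi
    refine ⟨i, y i, ((hne i).2 rfl).symm, funext fun j => ?_⟩
    by_cases hj : j = i
    · subst hj; simp
    · rw [Function.update_of_ne hj]
      exact (not_not.1 (mt (hne j).1 hj)).symm
  · rintro ⟨i, a, ha, rfl⟩
    refine ⟨i, Finset.ext fun j => ?_⟩
    by_cases hj : j = i
    · subst hj; simpa using ha.symm
    · simp [hj]

theorem two_le_hammingDist {x y : ∀ i, β i} {i j : ι} (hij : i ≠ j) (hi : x i ≠ y i)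
    (hj : x j ≠ y j) : 2 ≤ hammingDist x y := by
  rw [← Finset.card_pair hij]
  exact Finset.card_le_card fun k hk => by
    rcases Finset.mem_insert.1 hk with rfl | hk
    · simpa using hi
    · simpa [Finset.mem_singleton.1 hk] using hj

end hammingDist

section hamming

open Function SimpleGraph

variable {n q : ℕ}

theorem hamming_adj_iff {x y : Fin n → Fin q} :
    (hamming n q).Adj x y ↔ ∃ i, ∃ a ≠ x i, y = update x i a :=
  hammingDist_eq_one_iff

theorem hamming_adj_update {x : Fin n → Fin q} {i : Fin n} {a : Fin q} (ha : a ≠ x i) :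
    (hamming n q).Adj x (update x i a) :=
  hamming_adj_iff.2 ⟨i, a, ha, rfl⟩

theorem hamming_adj_update_update (x : Fin n → Fin q) (i : Fin n) {a b : Fin q} (hab : a ≠ b) :
    (hamming n q).Adj (update x i a) (update x i b) := by
  simpa using hamming_adj_update (x := update x i a) (i := i) (a := b) (by simpa using hab.symm)

theorem hamming_not_adj_update_update {x : Fin n → Fin q} {i j : Fin n} (hij : i ≠ j)
    {a b : Fin q} (ha : a ≠ x i) (hb : b ≠ x j) :
    ¬ (hamming n q).Adj (update x i a) (update x j b) := by
  have h2 : 2 ≤ hammingDist (update x i a) (update x j b) :=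
    two_le_hammingDist hij (by simpa [hij] using ha) (by simpa [hij.symm] using hb.symm)
  exact fun h1 : hammingDist _ _ = 1 => by omega

theorem eq_update_of_hamming_adj {x y : Fin n → Fin q} (h : (hamming n q).Adj x y) {i : Fin n}
    (hi : y i ≠ x i) : y = update x i (y i) := by
  obtain ⟨k, a, -, rfl⟩ := hamming_adj_iff.1 h
  obtain rfl : i = k := by
    by_contra hik
    exact hi (update_of_ne hik ..)
  simp

def coordClique (x : Fin n → Fin q) (i : Fin n) : Set ((hamming n q).neighborSet x) :=
  {y | (y : Fin n → Fin q) i ≠ x i}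

theorem isClique_coordClique (x : Fin n → Fin q) (i : Fin n) :
    ((hamming n q).induce ((hamming n q).neighborSet x)).IsClique (coordClique x i) := by
  intro y hy z hz hyz
  have hy' := eq_update_of_hamming_adj y.2 hy
  have hz' := eq_update_of_hamming_adj z.2 hz
  rw [induce_adj, hy', hz']
  exact hamming_adj_update_update x i fun h => hyz (Subtype.ext (by rw [hy', hz', h]))

theorem exists_mem_coordClique {x : Fin n → Fin q} (y : (hamming n q).neighborSet x) :
    ∃ i, y ∈ coordClique x i := by
  obtain ⟨i, a, ha, hy⟩ := hamming_adj_iff.1 y.2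
  exact ⟨i, by simp [coordClique, hy, ha]⟩

def updateNeighbor (x a : Fin n → Fin q) (ha : ∀ i, a i ≠ x i) (i : Fin n) :
    (hamming n q).neighborSet x :=
  ⟨update x i (a i), hamming_adj_update (ha i)⟩

theorem updateNeighbor_injective {x a : Fin n → Fin q} (ha : ∀ i, a i ≠ x i) :
    Injective (updateNeighbor x a ha) := fun i j h => by
  by_contra hij
  have := congrArg (fun y : (hamming n q).neighborSet x => (y : Fin n → Fin q) i) h
  exact ha i (by simpa [updateNeighbor, hij] using this)

theorem isIndepSet_range_updateNeighbor {x a : Fin n → Fin q} (ha : ∀ i, a i ≠ x i) :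
    ((hamming n q).induce ((hamming n q).neighborSet x)).IsIndepSet
      (Set.range (updateNeighbor x a ha)) := by
  rintro _ ⟨i, rfl⟩ _ ⟨j, rfl⟩ hne
  exact hamming_not_adj_update_update (fun hij => hne (congrArg _ hij)) (ha i) (ha j)

end hamming

theorem hamming_neighborhood_vcc_general (n q : ℕ) (hq : 2 ≤ q)
    (x : Fin n → Fin q) :
    vccNum (SimpleGraph.induce ((hamming n q).neighborSet x) (hamming n q)) = n := by
  have : Nontrivial (Fin q) := Fin.nontrivial_iff_two_le.mpr hq
  choose a ha using fun i => exists_ne (x i)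
  apply le_antisymm
  · simpa using SimpleGraph.vccNum_le_card _ (isClique_coordClique x) exists_mem_coordClique
  · simpa using SimpleGraph.card_le_vccNum (updateNeighbor_injective ha)
      (isIndepSet_range_updateNeighbor ha)

/-- For n, q ≥ 2, the vertex clique cover number of the subgraph of H(n,q)
induced by an open neighborhood equals n. -/
theorem hamming_neighborhood_vcc (n q : ℕ) (hn : 2 ≤ n) (hq : 2 ≤ q)
    (x : Fin n → Fin q) :
    vccNum (SimpleGraph.induce ((hamming n q).neighborSet x) (hamming n q)) = n :=
  hamming_neighborhood_vcc_general n q hq x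
end

section
/- For n ≥ 2 and q ≥ 2, the competition number of the Hamming graph H(n,q) is at least n. -/
/-- The competition number of a graph `G`: the least `k` such that `G` together with
`k` isolated vertices is the competition graph of some acyclic digraph. -/
noncomputable def CompetitionNumber {V : Type*} (G : SimpleGraph V) : ℕ :=
  sInf {k | ∃ D : (V ⊕ Fin k) → (V ⊕ Fin k) → Prop,
    (∀ w, ¬ Relation.TransGen D w w) ∧
    (∀ a b, (a ≠ b ∧ ∃ w, D a w ∧ D b w) ↔
      ∃ u v, a = Sum.inl u ∧ b = Sum.inl v ∧ G.Adj u v)}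

/-!
Realize `H(n,q)` by an acyclic digraph `D` with `k` extra vertices. By acyclicity some vertex
`v` of the graph has all its prey among the extra vertices. Its `n` neighbours obtained by
changing one coordinate each are pairwise at Hamming distance `2`, hence pairwise
non-adjacent, so each of them shares with `v` a prey that no other of them eats: these are `n`
distinct extra vertices.
-/

open Function Relation

theorem Relation.not_transGen_self_of_isLeft_isRight {α β : Type*} {D : α ⊕ β → α ⊕ β → Prop}
    (hD : ∀ a b, D a b → a.isLeft ∧ b.isRight) (w : α ⊕ β) : ¬ TransGen D w w := by
  intro hw
  obtain ⟨_, hw_out, -⟩ := TransGen.head'_iff.mp hw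
  obtain ⟨_, -, hw_in⟩ := TransGen.tail'_iff.mp hw
  have hl := (hD _ _ hw_out).1
  have hr := (hD _ _ hw_in).2
  cases w <;> simp at hl hr

section Competition

variable {V : Type*}

structure IsCompetitionRealization (G : SimpleGraph V) {k : ℕ}
    (D : V ⊕ Fin k → V ⊕ Fin k → Prop) : Prop where
  acyclic : ∀ w, ¬ TransGen D w w
  compete_iff : ∀ a b, (a ≠ b ∧ ∃ w, D a w ∧ D b w) ↔
    ∃ u v, a = Sum.inl u ∧ b = Sum.inl v ∧ G.Adj u v

theorem competitionNumber_eq_sInf (G : SimpleGraph V) :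
    CompetitionNumber G =
      sInf {k | ∃ D : V ⊕ Fin k → V ⊕ Fin k → Prop, IsCompetitionRealization G D} := by
  refine congrArg sInf (Set.ext fun k => ?_)
  exact ⟨fun ⟨D, hA, hC⟩ => ⟨D, hA, hC⟩, fun ⟨D, hD⟩ => ⟨D, hD.acyclic, hD.compete_iff⟩⟩

/-- One prey for every ordered pair of adjacent vertices. -/
theorem exists_isCompetitionRealization [Finite V] (G : SimpleGraph V) :
    ∃ (k : ℕ) (D : V ⊕ Fin k → V ⊕ Fin k → Prop), IsCompetitionRealization G D := by
  let e : V × V ≃ Fin (Nat.card (V × V)) := Finite.equivFin _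
  refine ⟨_, fun a w => ∃ u v, G.Adj u v ∧ w = Sum.inr (e (u, v)) ∧
      (a = Sum.inl u ∨ a = Sum.inl v), ?_, ?_⟩
  · refine not_transGen_self_of_isLeft_isRight ?_
    rintro a w ⟨u, v, -, rfl, rfl | rfl⟩ <;> simp
  · intro a b
    constructor
    · rintro ⟨hab, w, ⟨u, v, huv, rfl, ha⟩, ⟨u', v', -, hw, hb⟩⟩
      obtain ⟨rfl, rfl⟩ := Prod.ext_iff.mp (e.injective (Sum.inr_injective hw))
      rcases ha with rfl | rfl <;> rcases hb with rfl | rfl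
      · exact absurd rfl hab
      · exact ⟨u, v, rfl, rfl, huv⟩
      · exact ⟨v, u, rfl, rfl, huv.symm⟩
      · exact absurd rfl hab
    · rintro ⟨u, v, rfl, rfl, huv⟩
      exact ⟨by simpa using huv.ne, _, ⟨u, v, huv, rfl, Or.inl rfl⟩,
        ⟨u, v, huv, rfl, Or.inr rfl⟩⟩

theorem le_competitionNumber [Finite V] {G : SimpleGraph V} {m : ℕ}
    (h : ∀ (k : ℕ) (D : V ⊕ Fin k → V ⊕ Fin k → Prop), IsCompetitionRealization G D → m ≤ k) :
    m ≤ CompetitionNumber G := by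
  rw [competitionNumber_eq_sInf]
  obtain ⟨k, D, hD⟩ := exists_isCompetitionRealization G
  exact le_csInf ⟨k, D, hD⟩ fun k ⟨D, hD⟩ => h k D hD

namespace IsCompetitionRealization

variable {G : SimpleGraph V} {k : ℕ} {D : V ⊕ Fin k → V ⊕ Fin k → Prop}

theorem exists_forall_isRight [Finite V] [Nonempty V] (hD : IsCompetitionRealization G D) :
    ∃ v, ∀ w, D (Sum.inl v) w → w.isRight := by
  let r : V → V → Prop := fun u v => TransGen D (Sum.inl v) (Sum.inl u)
  have : IsTrans V r := ⟨fun _ _ _ h₁ h₂ => h₂.trans h₁⟩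
  have : Std.Irrefl r := ⟨fun v => hD.acyclic (Sum.inl v)⟩
  obtain ⟨v, -, hv⟩ := (Finite.wellFounded_of_trans_of_irrefl r).has_min Set.univ Set.univ_nonempty
  refine ⟨v, fun w hvw => ?_⟩
  cases w with
  | inl u => exact absurd (TransGen.single hvw) (hv u trivial)
  | inr _ => rfl

/-- Each neighbour of `v` shares a prey with `v`, necessarily an extra vertex, and two
non-adjacent neighbours cannot share one. -/
theorem card_le_of_isIndepSet (hD : IsCompetitionRealization G D) {v : V}
    (hv : ∀ w, D (Sum.inl v) w → w.isRight) {s : Finset V} (hs : ∀ u ∈ s, G.Adj u v)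
    (hind : G.IsIndepSet s) : s.card ≤ k := by
  have hprey : ∀ u : s, ∃ p : Fin k, D (Sum.inl u) (Sum.inr p) := by
    rintro ⟨u, hu⟩
    obtain ⟨-, w, huw, hvw⟩ := (hD.compete_iff _ _).mpr ⟨u, v, rfl, rfl, hs u hu⟩
    obtain ⟨p, rfl⟩ := Sum.isRight_iff.mp (hv w hvw)
    exact ⟨p, huw⟩
  choose prey hprey using hprey
  have hinj : Injective prey := by
    rintro ⟨u, hu⟩ ⟨u', hu'⟩ hp
    by_contra hne
    have hne' : u ≠ u' := fun h => hne (Subtype.ext h)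
    obtain ⟨_, _, hu, hu', hadj⟩ := (hD.compete_iff (Sum.inl u) (Sum.inl u')).mp
      ⟨by simpa using hne', _, hprey ⟨u, hu⟩, hp ▸ hprey ⟨u', hu'⟩⟩
    cases Sum.inl_injective hu
    cases Sum.inl_injective hu'
    exact hind ‹u ∈ s› ‹u' ∈ s› hne' hadj
  simpa using Fintype.card_le_of_injective prey hinj

end IsCompetitionRealization

theorem le_competitionNumber_of_forall_exists_isIndepSet [Finite V] [Nonempty V]
    {G : SimpleGraph V} {m : ℕ}
    (h : ∀ v, ∃ s : Finset V, s.card = m ∧ (∀ u ∈ s, G.Adj u v) ∧ G.IsIndepSet s) :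
    m ≤ CompetitionNumber G :=
  le_competitionNumber fun _ _ hD => by
    obtain ⟨v, hv⟩ := hD.exists_forall_isRight
    obtain ⟨s, rfl, hs, hind⟩ := h v
    exact hD.card_le_of_isIndepSet hv hs hind

end Competition

section Hamming

variable {ι β : Type*} [Fintype ι] [DecidableEq ι] [DecidableEq β]

theorem hammingDist_update_self (v : ι → β) {i : ι} {a : β} (ha : a ≠ v i) :
    hammingDist (update v i a) v = 1 := by
  rw [hammingDist, Finset.card_eq_one]
  refine ⟨i, Finset.ext fun j => ?_⟩
  by_cases h : j = i
  · subst h; simpa using ha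
  · simp [h]

theorem hammingDist_update_update (v : ι → β) {i j : ι} {a b : β} (hij : i ≠ j)
    (ha : a ≠ v i) (hb : b ≠ v j) :
    hammingDist (update v i a) (update v j b) = 2 := by
  rw [hammingDist, Finset.card_eq_two]
  refine ⟨i, j, hij, Finset.ext fun l => ?_⟩
  by_cases hi : l = i
  · subst hi; simpa [hij] using ha
  · by_cases hj : l = j
    · subst hj; simpa [hi, eq_comm] using hb
    · simp [hi, hj]

end Hamming

theorem hamming_exists_isIndepSet_neighbors {n q : ℕ} (hq : 2 ≤ q) (v : Fin n → Fin q) :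
    ∃ s : Finset (Fin n → Fin q), s.card = n ∧ (∀ u ∈ s, (hamming n q).Adj u v) ∧
      (hamming n q).IsIndepSet s := by
  have : Nontrivial (Fin q) := Fin.nontrivial_iff_two_le.mpr hq
  choose c hc using fun i => exists_ne (v i)
  have hinj : Injective fun i => update v i (c i) := by
    intro i j hij
    by_contra hne
    exact hc i (by simpa [hne] using congrFun hij i)
  refine ⟨Finset.univ.image fun i => update v i (c i), ?_, ?_, ?_⟩
  · simp [Finset.card_image_of_injective _ hinj]
  · simp only [Finset.mem_image, Finset.mem_univ, true_and, forall_exists_index,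
      forall_apply_eq_imp_iff]
    exact fun i => hammingDist_update_self v (hc i)
  · simp only [Finset.coe_image, Finset.coe_univ, Set.image_univ]
    rintro _ ⟨i, rfl⟩ _ ⟨j, rfl⟩ hne
    have hij : i ≠ j := fun h => hne (h ▸ rfl)
    change hammingDist _ _ ≠ 1
    rw [hammingDist_update_update v hij (hc i) (hc j)]
    decide

theorem hamming_compnum_lower_general (n q : ℕ) (hq : 2 ≤ q) :
    n ≤ CompetitionNumber (hamming n q) := by
  have : Nonempty (Fin q) := ⟨⟨0, by omega⟩⟩
  exact le_competitionNumber_of_forall_exists_isIndepSet (hamming_exists_isIndepSet_neighbors hq)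

/-- For n, q ≥ 2, k(H(n,q)) ≥ n. -/
theorem hamming_compnum_lower (n q : ℕ) (hn : 2 ≤ n) (hq : 2 ≤ q) :
    n ≤ CompetitionNumber (hamming n q) :=
  hamming_compnum_lower_general n q hq
end

section
/- For q ≥ 2, the competition number of the Hamming graph H(2,q) = K_q □ K_q (the rook's graph) equals 2. -/
open Relation

lemma Relation.not_transGen_self_of_map_lt {α β : Type*} [Preorder β] {r : α → α → Prop}
    (f : α → β) (hf : ∀ a b, r a b → f b < f a) (a : α) : ¬ TransGen r a a := fun h => by
  have := h.lift (p := fun x y => y < x) f hf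
  rw [transGen_eq_self] at this
  exact lt_irrefl _ this

lemma Relation.exists_forall_not_rel_of_not_transGen_self {α : Type*} [Finite α]
    {r : α → α → Prop} (hr : ∀ a, ¬ TransGen r a a) {s : Set α} (hs : s.Nonempty) :
    ∃ a ∈ s, ∀ b ∈ s, ¬ r a b := by
  have : IsTrans α (flip (TransGen r)) := ⟨fun _ _ _ hab hbc => hbc.trans hab⟩
  have : Std.Irrefl (flip (TransGen r)) := ⟨hr⟩
  obtain ⟨a, ha, hmin⟩ :=
    (Finite.wellFounded_of_trans_of_irrefl (flip (TransGen r))).has_min s hs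
  exact ⟨a, ha, fun b hb hab => hmin b hb (.single hab)⟩

namespace SimpleGraph

variable {V : Type*} (G : SimpleGraph V)

structure IsCompetitionDigraph {k : ℕ} (D : V ⊕ Fin k → V ⊕ Fin k → Prop) : Prop where
  acyclic : ∀ w, ¬ TransGen D w w
  commonPrey_iff : ∀ a b, (a ≠ b ∧ ∃ w, D a w ∧ D b w) ↔
    ∃ u v, a = Sum.inl u ∧ b = Sum.inl v ∧ G.Adj u v

variable {G}

lemma competitionNumber_eq_of {n : ℕ}
    (hn : ∃ D : V ⊕ Fin n → V ⊕ Fin n → Prop, G.IsCompetitionDigraph D)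
    (hmin : ∀ k (D : V ⊕ Fin k → V ⊕ Fin k → Prop), G.IsCompetitionDigraph D → n ≤ k) :
    CompetitionNumber G = n := by
  obtain ⟨D, hD⟩ := hn
  unfold CompetitionNumber
  refine le_antisymm (Nat.sInf_le ⟨D, hD.acyclic, hD.commonPrey_iff⟩)
    (le_csInf ⟨n, D, hD.acyclic, hD.commonPrey_iff⟩ ?_)
  rintro k ⟨D', hacyclic, hprey⟩
  exact hmin k D' ⟨hacyclic, hprey⟩

namespace IsCompetitionDigraph

variable {k : ℕ} {D : V ⊕ Fin k → V ⊕ Fin k → Prop}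

lemma exists_commonPrey (hD : G.IsCompetitionDigraph D) {u v : V} (huv : G.Adj u v) :
    ∃ w, D (Sum.inl u) w ∧ D (Sum.inl v) w :=
  ((hD.commonPrey_iff _ _).2 ⟨u, v, rfl, rfl, huv⟩).2

lemma adj_of_commonPrey (hD : G.IsCompetitionDigraph D) {u v : V} (huv : u ≠ v) {w}
    (hu : D (Sum.inl u) w) (hv : D (Sum.inl v) w) : G.Adj u v := by
  obtain ⟨u', v', hu', hv', hadj⟩ :=
    (hD.commonPrey_iff _ _).1 ⟨fun h => huv (Sum.inl_injective h), w, hu, hv⟩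
  rwa [Sum.inl_injective hu', Sum.inl_injective hv']

lemma two_le [Finite V] [Nonempty V] (hD : G.IsCompetitionDigraph D)
    (hG : ∀ v, ∃ u w, G.Adj v u ∧ G.Adj v w ∧ u ≠ w ∧ ¬ G.Adj u w) : 2 ≤ k := by
  obtain ⟨-, ⟨v, rfl⟩, hv⟩ :=
    exists_forall_not_rel_of_not_transGen_self hD.acyclic (Set.range_nonempty Sum.inl)
  have extraPrey : ∀ u, G.Adj v u → ∃ z, D (Sum.inl u) (Sum.inr z) := by
    intro u hvu
    obtain ⟨w, hvw, huw⟩ := hD.exists_commonPrey hvu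
    rcases w with x | z
    · exact absurd hvw (hv _ ⟨x, rfl⟩)
    · exact ⟨z, huw⟩
  obtain ⟨u, w, hvu, hvw, huw, hnadj⟩ := hG v
  obtain ⟨z, hz⟩ := extraPrey u hvu
  obtain ⟨z', hz'⟩ := extraPrey w hvw
  by_contra! hk
  obtain rfl : z = z' := Fin.ext (by omega)
  exact hnadj (hD.adj_of_commonPrey huw hz hz')

end IsCompetitionDigraph

def cliquePreyDigraph {ι : Type*} {k : ℕ} (C : ι → Set V) (p : ι → V ⊕ Fin k) :
    V ⊕ Fin k → V ⊕ Fin k → Prop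
  | Sum.inl x, w => ∃ i, x ∈ C i ∧ p i = w
  | Sum.inr _, _ => False

lemma isCompetitionDigraph_cliquePreyDigraph {ι β : Type*} [Preorder β] {k : ℕ}
    {C : ι → Set V} {p : ι → V ⊕ Fin k} (hclique : ∀ i, G.IsClique (C i))
    (hcover : ∀ u v, G.Adj u v → ∃ i, u ∈ C i ∧ v ∈ C i) (hp : p.Injective)
    (rank : V ⊕ Fin k → β) (hrank : ∀ i, ∀ x ∈ C i, rank (p i) < rank (Sum.inl x)) :
    G.IsCompetitionDigraph (cliquePreyDigraph C p) where
  acyclic := not_transGen_self_of_map_lt rank <| by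
    rintro (x | z) w hxw
    · simp only [cliquePreyDigraph] at hxw
      obtain ⟨i, hx, rfl⟩ := hxw
      exact hrank i x hx
    · exact hxw.elim
  commonPrey_iff a b := by
    constructor
    · rintro ⟨hab, w, haw, hbw⟩
      rcases a with x | _
      · rcases b with y | _
        · obtain ⟨i, hx, rfl⟩ := haw
          obtain ⟨j, hy, hji⟩ := hbw
          obtain rfl : i = j := hp hji.symm
          exact ⟨x, y, rfl, rfl, hclique i hx hy fun h => hab (h ▸ rfl)⟩
        · exact hbw.elim
      · exact haw.elim
    · rintro ⟨u, v, rfl, rfl, huv⟩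
      obtain ⟨i, hu, hv⟩ := hcover u v huv
      exact ⟨fun h => huv.ne (Sum.inl_injective h), p i, ⟨i, hu, rfl⟩, ⟨i, hv, rfl⟩⟩

end SimpleGraph

lemma hammingDist_eq_one_iff_of_fin_two {β : Type*} [DecidableEq β] {x y : Fin 2 → β} :
    hammingDist x y = 1 ↔ x ≠ y ∧ ∃ d, x d = y d := by
  simp only [hammingDist, Finset.card_filter, Fin.sum_univ_two, Ne, funext_iff, Fin.forall_fin_two,
    Fin.exists_fin_two]
  by_cases h0 : x 0 = y 0 <;> by_cases h1 : x 1 = y 1 <;> simp [h0, h1]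

lemma hamming_two_adj_iff {q : ℕ} {x y : Fin 2 → Fin q} :
    (hamming 2 q).Adj x y ↔ x ≠ y ∧ ∃ d, x d = y d :=
  hammingDist_eq_one_iff_of_fin_two

lemma hamming_two_exists_nonadj_neighbors {q : ℕ} (hq : 2 ≤ q) (v : Fin 2 → Fin q) :
    ∃ u w, (hamming 2 q).Adj v u ∧ (hamming 2 q).Adj v w ∧ u ≠ w ∧
      ¬ (hamming 2 q).Adj u w := by
  have : Nontrivial (Fin q) := Fin.nontrivial_iff_two_le.2 hq
  obtain ⟨a, ha⟩ := exists_ne (v 0)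
  obtain ⟨b, hb⟩ := exists_ne (v 1)
  refine ⟨Function.update v 0 a, Function.update v 1 b, ?_, ?_, ?_, ?_⟩ <;>
    simp [hamming_two_adj_iff, funext_iff, Fin.forall_fin_two, Fin.exists_fin_two, ha,
      ha.symm, hb.symm]

def hammingLine (q : ℕ) (l : Fin 2 × Fin q) : Set (Fin 2 → Fin q) := {x | x l.1 = l.2}

/-- Row `0` and column `0` prey on the two extra vertices, row `t ≥ 1` on the last vertex
`(t - 1, q - 1)` of row `t - 1`, column `t ≥ 1` on `(0, t - 1)`; `hammingRank` (row-major position,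
shifted past the extra vertices) decreases along every arc. -/
def hammingLinePrey (q : ℕ) (l : Fin 2 × Fin q) : (Fin 2 → Fin q) ⊕ Fin 2 :=
  if ht : (l.2 : ℕ) = 0 then Sum.inr l.1
  else if l.1 = 0 then Sum.inl ![⟨l.2 - 1, by omega⟩, ⟨q - 1, by omega⟩]
  else Sum.inl ![⟨0, by omega⟩, ⟨l.2 - 1, by omega⟩]

def hammingRank (q : ℕ) : (Fin 2 → Fin q) ⊕ Fin 2 → ℕ
  | Sum.inl x => x 0 * q + x 1 + 2
  | Sum.inr z => z

lemma hammingLine_isClique {q : ℕ} (l : Fin 2 × Fin q) :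
    (hamming 2 q).IsClique (hammingLine q l) :=
  fun _ hx _ hy hxy => hamming_two_adj_iff.2 ⟨hxy, l.1, hx.trans hy.symm⟩

lemma exists_hammingLine_of_adj {q : ℕ} {u v : Fin 2 → Fin q} (huv : (hamming 2 q).Adj u v) :
    ∃ l, u ∈ hammingLine q l ∧ v ∈ hammingLine q l := by
  obtain ⟨-, d, hd⟩ := hamming_two_adj_iff.1 huv
  exact ⟨(d, u d), rfl, hd.symm⟩

lemma hammingLinePrey_injective (q : ℕ) : (hammingLinePrey q).Injective := by
  rintro ⟨d, t⟩ ⟨d', t'⟩ h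
  simp only [hammingLinePrey] at h
  split_ifs at h <;>
    simp only [Sum.inl.injEq, Sum.inr.injEq, funext_iff, Fin.forall_fin_two, Matrix.cons_val_zero,
      Matrix.cons_val_one, Fin.mk.injEq] at h <;>
    simp only [Prod.mk.injEq, Fin.ext_iff, Fin.val_zero] at * <;> omega

lemma hammingRank_hammingLinePrey_lt {q : ℕ} (l : Fin 2 × Fin q) {x : Fin 2 → Fin q}
    (hx : x ∈ hammingLine q l) :
    hammingRank q (hammingLinePrey q l) < hammingRank q (Sum.inl x) := by
  obtain ⟨d, t⟩ := l
  obtain rfl : x d = t := hx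
  dsimp only [hammingLinePrey]
  split_ifs with ht hd
  · simp only [hammingRank]
    omega
  · subst hd
    have : q ≤ x 0 * q := Nat.le_mul_of_pos_left q (by omega)
    simp only [hammingRank, Matrix.cons_val_zero, Matrix.cons_val_one, Nat.sub_one_mul]
    omega
  · obtain rfl : d = 1 := by omega
    simp only [hammingRank, Matrix.cons_val_zero, Matrix.cons_val_one]
    omega

lemma hamming_two_isCompetitionDigraph (q : ℕ) :
    (hamming 2 q).IsCompetitionDigraph
      (SimpleGraph.cliquePreyDigraph (hammingLine q) (hammingLinePrey q)) :=
  SimpleGraph.isCompetitionDigraph_cliquePreyDigraph hammingLine_isClique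
    (fun _ _ => exists_hammingLine_of_adj) (hammingLinePrey_injective q) (hammingRank q)
    fun l _ => hammingRank_hammingLinePrey_lt l

/-- For q ≥ 2, k(H(2,q)) = 2. -/
theorem compnum_H2q (q : ℕ) (hq : 2 ≤ q) :
    CompetitionNumber (hamming 2 q) = 2 := by
  have : Nonempty (Fin q) := ⟨⟨0, by omega⟩⟩
  exact SimpleGraph.competitionNumber_eq_of ⟨_, hamming_two_isCompetitionDigraph q⟩
    fun _ _ hD => hD.two_le (hamming_two_exists_nonadj_neighbors hq)
end

section
/- For any q_1, q_2, q_3 ≥ 2, there exists an acyclic digraph D whose competition graph is (K_{q_1} □ K_{q_2} □ K_{q_3}) ∪ I_6 and such that the family of in-neighborhoods of size at least 2 equals the family of maximal cliques of K_{q_1} □ K_{q_2} □ K_{q_3}; consequently k(K_{q_1} □ K_{q_2} □ K_{q_3}) ≤ 6. -/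
/-- The Cartesian product K_{q₁} □ K_{q₂} □ K_{q₃}: triples adjacent iff they
differ in exactly one coordinate. -/
def rook3 (q₁ q₂ q₃ : ℕ) : SimpleGraph (Fin q₁ × Fin q₂ × Fin q₃) where
  Adj x y := x ≠ y ∧
    ((x.1 = y.1 ∧ x.2.1 = y.2.1) ∨ (x.1 = y.1 ∧ x.2.2 = y.2.2) ∨
      (x.2.1 = y.2.1 ∧ x.2.2 = y.2.2))
  symm := by
    constructor
    rintro x y ⟨h1, h2⟩
    exact ⟨Ne.symm h1, by tauto⟩
  loopless := by constructor; rintro x ⟨h, -⟩; exact h rfl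

/-!
Every maximal clique of `K_{q₁} □ K_{q₂} □ K_{q₃}` is a line, obtained by fixing two coordinates.
Give each line `ℓ` its own prey and draw an arc from every point of `ℓ` to it. If distinct lines
get distinct prey, the nonempty in-neighbourhoods are exactly the lines, so two vertices compete
iff they are adjacent; and the digraph is acyclic as soon as some ranking of the vertices puts
every prey below all points of its line.

Rank the new vertices first, then the points `(a, b, c)` with `a, b ≤ 1` ordered by `c`, then
those with `a ≤ 1 < b` ordered by `(b, c)`, then the rest lexicographically. Then every line gets
a distinct prey among the points ranked below it, except the six lines `{(·,0,0)}`, `{(·,1,0)}`,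
`{(0,·,0)}`, `{(1,·,0)}`, `{(0,0,·)}`, `{(1,0,·)}`, whose least points are among the first three;
these get the six new vertices.
-/

open Function Relation

section PreyDigraph

variable {V E ι : Type*} (L : ι → Set V) (prey : ι → V ⊕ E)

def preyDigraph (u w : V ⊕ E) : Prop :=
  ∃ i, prey i = w ∧ ∃ x ∈ L i, u = .inl x

variable {L prey}

theorem not_transGen_preyDigraph_self {α : Type*} [Preorder α] (rank : V ⊕ E → α)
    (hrank : ∀ i, ∀ x ∈ L i, rank (prey i) < rank (.inl x)) (w : V ⊕ E) :
    ¬ TransGen (preyDigraph L prey) w w := by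
  have hdesc : preyDigraph L prey ≤ ((· > ·) on rank) := by
    rintro _ _ ⟨i, rfl, x, hx, rfl⟩
    exact hrank i x hx
  intro hw
  have hlt : TransGen (· > ·) (rank w) (rank w) := TransGen.lift rank hdesc w w hw
  rw [transGen_eq_self] at hlt
  exact lt_irrefl _ hlt

theorem setOf_preyDigraph_prey (hprey : Injective prey) (i : ι) :
    {u | preyDigraph L prey u (prey i)} = .inl '' L i := by
  ext u
  constructor
  · rintro ⟨j, hj, x, hx, rfl⟩
    exact ⟨x, hprey hj ▸ hx, rfl⟩
  · rintro ⟨x, hx, rfl⟩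
    exact ⟨i, rfl, x, hx, rfl⟩

theorem setOf_preyDigraph_eq_empty {w : V ⊕ E} (hw : w ∉ Set.range prey) :
    {u | preyDigraph L prey u w} = ∅ :=
  Set.eq_empty_of_forall_notMem fun _ ⟨i, hi, _⟩ => hw ⟨i, hi⟩

theorem preyDigraph_compete_iff {G : SimpleGraph V}
    (hG : ∀ u v, G.Adj u v ↔ u ≠ v ∧ ∃ i, u ∈ L i ∧ v ∈ L i) (hprey : Injective prey)
    (a b : V ⊕ E) :
    (a ≠ b ∧ ∃ w, preyDigraph L prey a w ∧ preyDigraph L prey b w) ↔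
      ∃ u v, a = .inl u ∧ b = .inl v ∧ G.Adj u v := by
  simp only [hG]
  constructor
  · rintro ⟨hab, _, ⟨i, rfl, u, hu, rfl⟩, ⟨j, hj, v, hv, rfl⟩⟩
    exact ⟨u, v, rfl, rfl, fun huv => hab (huv ▸ rfl), i, hu, hprey hj ▸ hv⟩
  · rintro ⟨u, v, rfl, rfl, huv, i, hu, hv⟩
    exact ⟨Sum.inl_injective.ne huv, prey i, ⟨i, rfl, u, hu, rfl⟩, ⟨i, rfl, v, hv, rfl⟩⟩

theorem preyDigraph_nontrivial_inNeighborhoods (hprey : Injective prey)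
    (hL : ∀ i, 2 ≤ (L i).ncard) :
    {S : Set (V ⊕ E) | (∃ w, S = {u | preyDigraph L prey u w}) ∧ 2 ≤ S.ncard} =
      Set.range fun i => .inl '' L i := by
  ext S
  constructor
  · rintro ⟨⟨w, rfl⟩, hS⟩
    by_cases hw : w ∈ Set.range prey
    · obtain ⟨i, rfl⟩ := hw
      exact ⟨i, (setOf_preyDigraph_prey hprey i).symm⟩
    · rw [setOf_preyDigraph_eq_empty hw, Set.ncard_empty] at hS
      omega
  · rintro ⟨i, rfl⟩
    refine ⟨⟨prey i, (setOf_preyDigraph_prey hprey i).symm⟩, ?_⟩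
    rw [Set.ncard_image_of_injective _ Sum.inl_injective]
    exact hL i

theorem image_inl_setOf (p : V → Prop) :
    (Sum.inl '' {x | p x} : Set (V ⊕ E)) = {w | ∃ x, w = .inl x ∧ p x} := by
  ext w
  simp [eq_comm, and_comm]

end PreyDigraph

inductive RookLine (q₁ q₂ q₃ : ℕ) : Type
  | along₁ (b : Fin q₂) (c : Fin q₃)
  | along₂ (a : Fin q₁) (c : Fin q₃)
  | along₃ (a : Fin q₁) (b : Fin q₂)

section RookLine

variable {q₁ q₂ q₃ : ℕ}

def RookLine.points : RookLine q₁ q₂ q₃ → Set (Fin q₁ × Fin q₂ × Fin q₃)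
  | along₁ b c => {x | x.2.1 = b ∧ x.2.2 = c}
  | along₂ a c => {x | x.1 = a ∧ x.2.2 = c}
  | along₃ a b => {x | x.1 = a ∧ x.2.1 = b}

theorem rook3_adj_iff_exists_rookLine (u v : Fin q₁ × Fin q₂ × Fin q₃) :
    (rook3 q₁ q₂ q₃).Adj u v ↔
      u ≠ v ∧ ∃ ℓ : RookLine q₁ q₂ q₃, u ∈ ℓ.points ∧ v ∈ ℓ.points := by
  refine and_congr_right fun _ => ⟨?_, ?_⟩
  · rintro (⟨h₁, h₂⟩ | ⟨h₁, h₂⟩ | ⟨h₁, h₂⟩)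
    · exact ⟨.along₃ v.1 v.2.1, ⟨h₁, h₂⟩, rfl, rfl⟩
    · exact ⟨.along₂ v.1 v.2.2, ⟨h₁, h₂⟩, rfl, rfl⟩
    · exact ⟨.along₁ v.2.1 v.2.2, ⟨h₁, h₂⟩, rfl, rfl⟩
  · rintro ⟨ℓ | ℓ | ℓ, ⟨hu₁, hu₂⟩, ⟨hv₁, hv₂⟩⟩
    · exact .inr (.inr ⟨hu₁.trans hv₁.symm, hu₂.trans hv₂.symm⟩)
    · exact .inr (.inl ⟨hu₁.trans hv₁.symm, hu₂.trans hv₂.symm⟩)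
    · exact .inl ⟨hu₁.trans hv₁.symm, hu₂.trans hv₂.symm⟩

theorem RookLine.ncard_points_along₁ (b : Fin q₂) (c : Fin q₃) :
    (along₁ b c : RookLine q₁ q₂ q₃).points.ncard = q₁ := by
  have hpts : (along₁ b c : RookLine q₁ q₂ q₃).points = Set.range fun a => (a, b, c) := by
    ext x; simp [points, Prod.ext_iff, eq_comm]
  rw [hpts, Set.ncard_range_of_injective fun _ _ h => congrArg Prod.fst h, Nat.card_fin]

theorem RookLine.ncard_points_along₂ (a : Fin q₁) (c : Fin q₃) :
    (along₂ a c : RookLine q₁ q₂ q₃).points.ncard = q₂ := by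
  have hpts : (along₂ a c : RookLine q₁ q₂ q₃).points = Set.range fun b => (a, b, c) := by
    ext x; simp [points, Prod.ext_iff, eq_comm]
  rw [hpts, Set.ncard_range_of_injective fun _ _ h => congrArg (·.2.1) h, Nat.card_fin]

theorem RookLine.ncard_points_along₃ (a : Fin q₁) (b : Fin q₂) :
    (along₃ a b : RookLine q₁ q₂ q₃).points.ncard = q₃ := by
  have hpts : (along₃ a b : RookLine q₁ q₂ q₃).points = Set.range fun c => (a, b, c) := by
    ext x; simp [points, Prod.ext_iff, eq_comm]
  rw [hpts, Set.ncard_range_of_injective fun _ _ h => congrArg (·.2.2) h, Nat.card_fin]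

theorem RookLine.two_le_ncard_points (h₁ : 2 ≤ q₁) (h₂ : 2 ≤ q₂) (h₃ : 2 ≤ q₃)
    (ℓ : RookLine q₁ q₂ q₃) : 2 ≤ ℓ.points.ncard := by
  cases ℓ <;> simp only [ncard_points_along₁, ncard_points_along₂, ncard_points_along₃, *]

theorem RookLine.range_image_inl_points {E : Type*} :
    (Set.range fun ℓ : RookLine q₁ q₂ q₃ => (Sum.inl '' ℓ.points : Set (_ ⊕ E))) =
      {S | (∃ p₂ p₃, S = {w | ∃ x, w = Sum.inl x ∧ x.2.1 = p₂ ∧ x.2.2 = p₃}) ∨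
           (∃ p₁ p₃, S = {w | ∃ x, w = Sum.inl x ∧ x.1 = p₁ ∧ x.2.2 = p₃}) ∨
           (∃ p₁ p₂, S = {w | ∃ x, w = Sum.inl x ∧ x.1 = p₁ ∧ x.2.1 = p₂})} := by
  ext S
  constructor
  · rintro ⟨ℓ | ℓ | ℓ, rfl⟩
    · exact .inl ⟨_, _, image_inl_setOf _⟩
    · exact .inr (.inl ⟨_, _, image_inl_setOf _⟩)
    · exact .inr (.inr ⟨_, _, image_inl_setOf _⟩)
  · rintro (⟨p₂, p₃, rfl⟩ | ⟨p₁, p₃, rfl⟩ | ⟨p₁, p₂, rfl⟩)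
    · exact ⟨.along₁ p₂ p₃, image_inl_setOf _⟩
    · exact ⟨.along₂ p₁ p₃, image_inl_setOf _⟩
    · exact ⟨.along₃ p₁ p₂, image_inl_setOf _⟩

def rookRank {E : Type*} : (Fin q₁ × Fin q₂ × Fin q₃) ⊕ E → ℕ ×ₗ ℕ ×ₗ ℕ ×ₗ ℕ
  | .inr _ => toLex (0, toLex (0, toLex (0, 0)))
  | .inl (a, b, c) =>
    if a.val ≤ 1 ∧ b.val ≤ 1 then toLex (1, toLex (c.val, toLex (b.val, a.val)))
    else if a.val ≤ 1 then toLex (2, toLex (b.val, toLex (c.val, a.val)))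
    else toLex (3, toLex (a.val, toLex (b.val, c.val)))

end RookLine

section Prey

variable {n₁ n₂ n₃ : ℕ}

/-- Apart from the six lines sent to new vertices, each line preys on one of the two points ranked
just below its least point. -/
def RookLine.prey : RookLine (n₁ + 2) (n₂ + 2) (n₃ + 2) →
    (Fin (n₁ + 2) × Fin (n₂ + 2) × Fin (n₃ + 2)) ⊕ Fin 6
  | along₁ ⟨0, _⟩ ⟨0, _⟩ => .inr 0
  | along₁ ⟨1, _⟩ ⟨0, _⟩ => .inr 1
  | along₁ ⟨0, _⟩ ⟨c + 1, _⟩ => .inl (0, 1, ⟨c, by omega⟩)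
  | along₁ ⟨1, _⟩ c => .inl (1, 0, c)
  | along₁ ⟨b + 2, _⟩ ⟨0, _⟩ => .inl (1, ⟨b + 1, by omega⟩, Fin.last _)
  | along₁ ⟨b + 2, hb⟩ ⟨c + 1, _⟩ => .inl (1, ⟨b + 2, hb⟩, ⟨c, by omega⟩)
  | along₂ ⟨0, _⟩ ⟨0, _⟩ => .inr 2
  | along₂ ⟨1, _⟩ ⟨0, _⟩ => .inr 3
  | along₂ ⟨0, _⟩ ⟨c + 1, _⟩ => .inl (1, 1, ⟨c, by omega⟩)
  | along₂ ⟨1, _⟩ c => .inl (0, 0, c)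
  | along₂ ⟨2, _⟩ ⟨0, _⟩ => .inl (0, Fin.last _, Fin.last _)
  | along₂ ⟨a + 3, _⟩ ⟨0, _⟩ => .inl (⟨a + 2, by omega⟩, Fin.last _, ⟨n₃, by omega⟩)
  | along₂ ⟨a + 2, ha⟩ ⟨c + 1, _⟩ => .inl (⟨a + 2, ha⟩, 0, ⟨c, by omega⟩)
  | along₃ ⟨0, _⟩ ⟨0, _⟩ => .inr 4
  | along₃ ⟨1, _⟩ ⟨0, _⟩ => .inr 5
  | along₃ ⟨0, _⟩ ⟨1, _⟩ => .inl (0, 0, 0)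
  | along₃ ⟨0, _⟩ ⟨b + 2, _⟩ => .inl (0, ⟨b + 1, by omega⟩, Fin.last _)
  | along₃ ⟨1, _⟩ ⟨1, _⟩ => .inl (1, 0, 0)
  | along₃ ⟨1, _⟩ ⟨b + 2, hb⟩ => .inl (0, ⟨b + 2, hb⟩, 0)
  | along₃ ⟨a + 2, ha⟩ ⟨b + 1, _⟩ => .inl (⟨a + 2, ha⟩, ⟨b, by omega⟩, Fin.last _)
  | along₃ ⟨2, _⟩ ⟨0, _⟩ => .inl (1, Fin.last _, Fin.last _)
  | along₃ ⟨a + 3, _⟩ ⟨0, _⟩ => .inl (⟨a + 2, by omega⟩, Fin.last _, Fin.last _)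

set_option maxHeartbeats 1000000 in
theorem RookLine.prey_injective :
    Injective (prey : RookLine (n₁ + 2) (n₂ + 2) (n₃ + 2) → _) := by
  intro ℓ ℓ' h
  rcases ℓ with ⟨⟨_ | _ | b, hb⟩, ⟨_ | c, hc⟩⟩ | ⟨⟨_ | _ | _ | a, ha⟩, ⟨_ | c, hc⟩⟩ |
      ⟨⟨_ | _ | _ | a, ha⟩, ⟨_ | _ | b, hb⟩⟩ <;>
    rcases ℓ' with ⟨⟨_ | _ | b', hb'⟩, ⟨_ | c', hc'⟩⟩ | ⟨⟨_ | _ | _ | a', ha'⟩, ⟨_ | c', hc'⟩⟩ |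
      ⟨⟨_ | _ | _ | a', ha'⟩, ⟨_ | _ | b', hb'⟩⟩ <;>
    simp only [prey, reduceCtorEq, Sum.inl.injEq, Sum.inr.injEq, Prod.mk.injEq, Fin.ext_iff,
      Fin.val_zero, Fin.val_one, Fin.val_last, Nat.zero_eq, Nat.succ_eq_add_one,
      true_and, false_and, and_true, and_false] at h <;>
    simp only [along₁.injEq, along₂.injEq, along₃.injEq, reduceCtorEq, Fin.mk.injEq,
      true_and, and_true] <;>
    omega

theorem RookLine.rookRank_prey_lt (ℓ : RookLine (n₁ + 2) (n₂ + 2) (n₃ + 2))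
    (x : Fin (n₁ + 2) × Fin (n₂ + 2) × Fin (n₃ + 2)) (hx : x ∈ ℓ.points) :
    rookRank (prey ℓ) < rookRank (.inl x : _ ⊕ Fin 6) := by
  obtain ⟨⟨a, ha⟩, ⟨b, hb⟩, ⟨c, hc⟩⟩ := x
  rcases ℓ with ⟨⟨_ | _ | b', hb'⟩, ⟨_ | c', hc'⟩⟩ | ⟨⟨_ | _ | _ | a', ha'⟩, ⟨_ | c', hc'⟩⟩ |
      ⟨⟨_ | _ | _ | a', ha'⟩, ⟨_ | _ | b', hb'⟩⟩ <;>
    simp only [points, Set.mem_ofPred_eq, Fin.ext_iff] at hx <;>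
    obtain ⟨rfl, rfl⟩ := hx <;>
    simp only [prey] <;> simp [rookRank] <;> (try split_ifs) <;>
    simp only [Prod.Lex.toLex_lt_toLex, true_and] <;>
    omega

end Prey

/-- For q₁,q₂,q₃ ≥ 2 there is an acyclic digraph whose competition graph is
(K_{q₁} □ K_{q₂} □ K_{q₃}) ∪ I₆ and whose in-neighborhoods of size ≥ 2 are exactly
the maximal cliques (the lines obtained by fixing two coordinates);
consequently k(K_{q₁} □ K_{q₂} □ K_{q₃}) ≤ 6. -/
theorem rook3_compnum_upper (q₁ q₂ q₃ : ℕ) (h₁ : 2 ≤ q₁) (h₂ : 2 ≤ q₂) (h₃ : 2 ≤ q₃) :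
    (∃ D : ((Fin q₁ × Fin q₂ × Fin q₃) ⊕ Fin 6) →
           ((Fin q₁ × Fin q₂ × Fin q₃) ⊕ Fin 6) → Prop,
      (∀ w, ¬ Relation.TransGen D w w) ∧
      (∀ a b, (a ≠ b ∧ ∃ w, D a w ∧ D b w) ↔
        ∃ u v, a = Sum.inl u ∧ b = Sum.inl v ∧ (rook3 q₁ q₂ q₃).Adj u v) ∧
      {S : Set ((Fin q₁ × Fin q₂ × Fin q₃) ⊕ Fin 6) |
          (∃ w, S = {u | D u w}) ∧ 2 ≤ S.ncard} =
        {S | (∃ p₂ p₃, S = {w | ∃ x, w = Sum.inl x ∧ x.2.1 = p₂ ∧ x.2.2 = p₃}) ∨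
             (∃ p₁ p₃, S = {w | ∃ x, w = Sum.inl x ∧ x.1 = p₁ ∧ x.2.2 = p₃}) ∨
             (∃ p₁ p₂, S = {w | ∃ x, w = Sum.inl x ∧ x.1 = p₁ ∧ x.2.1 = p₂})}) ∧
    CompetitionNumber (rook3 q₁ q₂ q₃) ≤ 6 := by
  obtain ⟨n₁, rfl⟩ := Nat.exists_eq_add_of_le' h₁
  obtain ⟨n₂, rfl⟩ := Nat.exists_eq_add_of_le' h₂
  obtain ⟨n₃, rfl⟩ := Nat.exists_eq_add_of_le' h₃
  let D := preyDigraph RookLine.points (@RookLine.prey n₁ n₂ n₃)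
  have hacyclic : ∀ w, ¬ TransGen D w w :=
    not_transGen_preyDigraph_self rookRank RookLine.rookRank_prey_lt
  have hcompete := preyDigraph_compete_iff (prey := @RookLine.prey n₁ n₂ n₃)
    rook3_adj_iff_exists_rookLine RookLine.prey_injective
  refine ⟨⟨D, hacyclic, hcompete, ?_⟩, Nat.sInf_le ⟨D, hacyclic, hcompete⟩⟩
  rw [preyDigraph_nontrivial_inNeighborhoods RookLine.prey_injective
    (RookLine.two_le_ncard_points h₁ h₂ h₃), RookLine.range_image_inl_points]
end
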